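/- arXiv:1112.5727 — 2 statements merged into one kernel-verified Lean document; each statement's English description precedes it below -/
import Mathlib

section
/- Let (S, supp) be a supp-perfect semigroup with support map supp : S → Set X, where X = ⋃_{a∈S} supp(a), and endow S with the semi-Zariski topology Ζ. Then for every n ∈ ℕ and every x ∈ X, the set {f ∈ S : |supp(f)| ≤ n and x ∈ supp(f)} is open in the subspace S_{≤n} = {f ∈ S : |supp(f)| ≤ n} of (S, Ζ). -/
/-- The semi-Zariski topology on a semigroup `S`: generated by the subbase of sets
`{x | a*x*b ≠ c}` and `{x | a*x*b ≠ c*x*d}` with `a, b, c, d ∈ S¹` (here `S¹ = WithOne S`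
is `S` with an external identity adjoined). -/
def semiZariski (T : Type*) [Mul T] : TopologicalSpace T :=
  TopologicalSpace.generateFrom
    ({U : Set T | ∃ a b c : WithOne T, U = {x : T | a * (x : WithOne T) * b ≠ c}} ∪
     {U : Set T | ∃ a b c d : WithOne T,
        U = {x : T | a * (x : WithOne T) * b ≠ c * (x : WithOne T) * d}})

/-!
Given `f` with `x ∈ supp f`, perfectness applied to the finite set `⋃ i < k, supp hᵢ \ {x}`
produces, one at a time, elements `h₀, …, hₙ` that do not commute with `f` and whose supports
pairwise meet at most in `x`. The elements not commuting with any `hᵢ` form a semi-Zariski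
neighbourhood of `f`; an element `g` of it with `x ∉ supp g` has disjoint support from no `hᵢ`,
so `supp g` meets the `n + 1` disjoint sets `supp hᵢ \ {x}` and has more than `n` points.
-/

open Function Topology

lemma semiZariski_isOpen_setOf_mul_ne_mul {T : Type*} [Mul T] (a : T) :
    IsOpen[semiZariski T] {g : T | a * g ≠ g * a} :=
  .basic _ <| .inr ⟨a, 1, 1, a, by ext g; simp [← WithOne.coe_mul]⟩

lemma ENat.card_le_encard_of_pairwise_disjoint {α ι : Type*} (s : Set α) (t : ι → Set α)
    (ht : Pairwise (Disjoint on t)) (hs : ∀ i, (s ∩ t i).Nonempty) :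
    ENat.card ι ≤ s.encard := by
  choose y hy using hs
  have hy_inj : Injective y := fun i j hij => by_contra fun hne =>
    Set.disjoint_left.1 (ht hne) (hy i).2 (hij ▸ (hy j).2)
  calc ENat.card ι ≤ (Set.range y).encard := hy_inj.encard_range
    _ ≤ s.encard := Set.encard_le_encard (Set.range_subset_iff.2 fun i => (hy i).1)

section SuppSemigroup

variable {S X : Type*} [Semigroup S] (supp : S → Set X)

lemma exists_pairwise_disjoint_not_commute (hfin : ∀ f : S, (supp f).Finite)
    (hperf : ∀ F : Set X, F.Finite →
      {f : S | supp f ⊆ F} = {g : S | ∀ f : S, supp f ⊆ Fᶜ → f * g = g * f})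
    {f : S} {x : X} (hx : x ∈ supp f) (k : ℕ) :
    ∃ h : Fin k → S, (∀ i, h i * f ≠ f * h i) ∧
      Pairwise (Disjoint on fun i => supp (h i) \ {x}) := by
  induction k with
  | zero => exact ⟨Fin.elim0, Fin.rec0, fun i => i.elim0⟩
  | succ k ih =>
    obtain ⟨h, hnc, hdisj⟩ := ih
    set F : Set X := ⋃ i, supp (h i) \ {x}
    have hf : f ∉ {f : S | supp f ⊆ F} := fun hfF => by
      simpa [F] using hfF hx
    rw [hperf F (Set.finite_iUnion fun i => (hfin _).sdiff)] at hf
    simp only [Set.mem_ofPred_eq, not_forall] at hf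
    obtain ⟨g, hgF, hgf⟩ := hf
    have hg_disj : ∀ i, Disjoint (supp g \ {x}) (supp (h i) \ {x}) := fun i =>
      (Set.disjoint_of_subset_left hgF disjoint_compl_left).mono Set.sdiff_subset
        (Set.subset_iUnion (fun i => supp (h i) \ {x}) i)
    refine ⟨Fin.cons g h, Fin.cases hgf hnc, pairwise_fin_succ_iff.2
      ⟨fun i => (hg_disj i).symm, hg_disj, hdisj⟩⟩

lemma le_encard_supp_of_not_commute
    (h2 : ∀ f g : S, supp f ∩ supp g = ∅ → f * g = g * f)
    {k : ℕ} {x : X} (h : Fin k → S) (hdisj : Pairwise (Disjoint on fun i => supp (h i) \ {x}))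
    {g : S} (hg : ∀ i, h i * g ≠ g * h i) (hx : x ∉ supp g) :
    (k : ℕ∞) ≤ (supp g).encard := by
  simpa using ENat.card_le_encard_of_pairwise_disjoint (supp g) _ hdisj fun i => by
    obtain ⟨y, hyh, hyg⟩ := Set.nonempty_iff_ne_empty.2 fun he => hg i (h2 _ _ he)
    exact ⟨y, hyg, hyh, fun hyx : y = x => hx (hyx ▸ hyg)⟩

end SuppSemigroup

theorem suppPerfect_mem_supp_open_in_le_n_general
    {S X : Type*} [Semigroup S] (supp : S → Set X)
    (h2 : ∀ f g : S, supp f ∩ supp g = ∅ → f * g = g * f)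
    (hfin : ∀ f : S, (supp f).Finite)
    (hperf : ∀ F : Set X, F.Finite →
      {f : S | supp f ⊆ F} = {g : S | ∀ f : S, supp f ⊆ Fᶜ → f * g = g * f})
    (n : ℕ) (x : X) :
    @IsOpen {f : S | (supp f).encard ≤ (n : ℕ∞)}
      (TopologicalSpace.induced Subtype.val (semiZariski S))
      {g : {f : S | (supp f).encard ≤ (n : ℕ∞)} | x ∈ supp g.1} := by
  let := semiZariski S
  refine isOpen_iff_forall_mem_open.2 fun f hf => ?_
  obtain ⟨h, hnc, hdisj⟩ := exists_pairwise_disjoint_not_commute supp hfin hperf hf (n + 1)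
  let V : Set S := ⋂ i, {g | h i * g ≠ g * h i}
  refine ⟨Subtype.val ⁻¹' V, fun g hg => ?_,
    isOpen_induced (isOpen_iInter_of_finite fun i => semiZariski_isOpen_setOf_mul_ne_mul (h i)),
    Set.mem_iInter.2 hnc⟩
  by_contra hxg
  have hcard := (le_encard_supp_of_not_commute supp h2 h hdisj (Set.mem_iInter.1 hg) hxg).trans g.2
  norm_cast at hcard
  omega

/-- In a supp-perfect semigroup with the semi-Zariski topology, for every `x ∈ X` the set
`{f ∈ S_{≤n} : x ∈ supp f}` is open in the subspace `S_{≤n} = {f : |supp f| ≤ n}`. -/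
theorem suppPerfect_mem_supp_open_in_le_n
    {S X : Type*} [Semigroup S] (supp : S → Set X)
    (h1 : ∀ f g : S, supp (f * g) ⊆ supp f ∪ supp g)
    (h2 : ∀ f g : S, supp f ∩ supp g = ∅ → f * g = g * f)
    (hX : (⋃ a : S, supp a) = Set.univ)
    (hfin : ∀ f : S, (supp f).Finite)
    (hSF : ∀ F : Set X, F.Finite → {f : S | supp f ⊆ F}.Finite)
    (hperf : ∀ F : Set X, F.Finite →
      {f : S | supp f ⊆ F} = {g : S | ∀ f : S, supp f ⊆ Fᶜ → f * g = g * f})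
    (n : ℕ) (x : X) :
    @IsOpen {f : S | (supp f).encard ≤ (n : ℕ∞)}
      (TopologicalSpace.induced Subtype.val (semiZariski S))
      {g : {f : S | (supp f).encard ≤ (n : ℕ∞)} | x ∈ supp g.1} :=
  suppPerfect_mem_supp_open_in_le_n_general supp h2 hfin hperf n x
end

section
/- Let (S, supp) be a supp-perfect semigroup with support map supp : S → Set X, where X = ⋃_{a∈S} supp(a). Then S endowed with its semi-Zariski topology Ζ is σ-discrete, i.e., S is a countable union of subspaces each of which is discrete in the subspace topology inherited from Ζ. -/
/-- A topological space (given by a topology `τ` on `S`) is σ-discrete if it is a countable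
union of subspaces, each of which is discrete in its subspace topology. -/
def SigmaDiscrete {S : Type*} (τ : TopologicalSpace S) : Prop :=
  ∃ D : ℕ → Set S, (⋃ n, D n) = Set.univ ∧
    ∀ n, @DiscreteTopology (D n) (TopologicalSpace.induced Subtype.val τ)

open Set Topology

section SemiZariski

variable {T : Type*} [Mul T]

lemma isOpen_semiZariski_ne (s : T) : IsOpen[semiZariski T] {y | y ≠ s} := by
  have : {y : T | y ≠ s} = {y : T | (1 : WithOne T) * (y : WithOne T) * 1 ≠ (s : WithOne T)} := by
    ext y
    simp
  rw [this]
  exact .basic _ (.inl ⟨1, 1, s, rfl⟩)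

lemma isOpen_semiZariski_not_commute (g : T) : IsOpen[semiZariski T] {y | ¬Commute g y} := by
  have : {y : T | ¬Commute g y} =
      {y : T | (g : WithOne T) * (y : WithOne T) * 1 ≠ 1 * (y : WithOne T) * g} := by
    ext y
    simp [Commute, SemiconjBy, ← WithOne.coe_mul]
  rw [this]
  exact .basic _ (.inr ⟨g, 1, 1, g, rfl⟩)

lemma t1Space_semiZariski : @T1Space T (semiZariski T) :=
  letI := semiZariski T
  ⟨fun s => isOpen_compl_iff.mp (isOpen_semiZariski_ne s)⟩

end SemiZariski

lemma nat_card_le_ncard_of_pairwise_inter_subset_singleton {ι X : Type*} {A : Set X}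
    (hA : A.Finite) {q : X} (hqA : q ∉ A) {B : ι → Set X}
    (hB : Pairwise fun i j => B i ∩ B j ⊆ {q}) (hAB : ∀ i, (B i ∩ A).Nonempty) :
    Nat.card ι ≤ A.ncard := by
  choose p hpB hpA using hAB
  have hp_inj : Function.Injective p := by
    intro i j hij
    by_contra hne
    have hpq : p i = q := hB hne ⟨hpB i, hij ▸ hpB j⟩
    exact hqA (hpq ▸ hpA i)
  have := hA.to_subtype
  exact Nat.card_le_card_of_injective (fun i => (⟨p i, hpA i⟩ : A))
    fun i j h => hp_inj (congrArg Subtype.val h)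

section SuppSemigroup

variable {S X : Type*} [Mul S] {supp : S → Set X}

lemma exists_seq_not_commute_pairwise_inter_subset (hfin : ∀ f : S, (supp f).Finite)
    (hcent : ∀ F : Set X, F.Finite → ∀ g : S, (∀ f, supp f ⊆ Fᶜ → Commute f g) → supp g ⊆ F)
    {f : S} {q : X} (hq : q ∈ supp f) :
    ∃ W : ℕ → S, (∀ i, ¬Commute (W i) f) ∧ Pairwise fun i j => supp (W i) ∩ supp (W j) ⊆ {q} := by
  let r : S → S → Prop := fun g g' => supp g ∩ supp g' ⊆ {q}
  have : Std.Symm r := ⟨fun g g' h => (inter_comm (supp g') (supp g)).subset.trans h⟩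
  refine exists_seq_of_forall_finset_exists' (fun g => ¬Commute g f) r fun s _ => ?_
  -- Avoiding every earlier support except at `q` forces the new supports to meet only in `q`.
  set F := (⋃ g ∈ s, supp g) \ {q}
  have hF : F.Finite := (s.finite_toSet.biUnion fun g _ => hfin g).sdiff
  have hfF : ¬supp f ⊆ F := fun h => (h hq).2 rfl
  obtain ⟨g, hgF, hgf⟩ : ∃ g, supp g ⊆ Fᶜ ∧ ¬Commute g f := by
    by_contra! h
    exact hfF (hcent F hF f h)
  refine ⟨g, hgf, fun g' hg' p ⟨hpg', hpg⟩ => ?_⟩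
  by_contra hpq
  exact hgF hpg ⟨mem_biUnion hg' hpg', hpq⟩

lemma exists_isOpen_semiZariski_inter_ncard_eq_singleton
    (hdisj : ∀ f g : S, supp f ∩ supp g = ∅ → Commute f g)
    (hfin : ∀ f : S, (supp f).Finite) (hSF : ∀ F : Set X, F.Finite → {f : S | supp f ⊆ F}.Finite)
    (hcent : ∀ F : Set X, F.Finite → ∀ g : S, (∀ f, supp f ⊆ Fᶜ → Commute f g) → supp g ⊆ F)
    (f : S) :
    ∃ U, IsOpen[semiZariski S] U ∧ U ∩ {x | (supp x).ncard = (supp f).ncard} = {f} := by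
  let _ : TopologicalSpace S := semiZariski S
  have := t1Space_semiZariski (T := S)
  have := (hfin f).to_subtype
  choose W hWf hW using fun q : supp f =>
    exists_seq_not_commute_pairwise_inter_subset hfin hcent q.2
  set n := (supp f).ncard
  refine ⟨({x | supp x ⊆ supp f} \ {f})ᶜ ∩ ⋂ (q : supp f) (i : Fin (n + 1)),
    {y | ¬Commute (W q i) y}, ?_, ?_⟩
  · exact (hSF _ (hfin f)).sdiff.isClosed.isOpen_compl.inter
      (isOpen_iInter_of_finite fun q => isOpen_iInter_of_finite fun i =>
        isOpen_semiZariski_not_commute _)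
  ext x
  simp only [mem_inter_iff, mem_compl_iff, mem_sdiff, mem_iInter, mem_ofPred_eq,
    mem_singleton_iff, not_and, not_not]
  constructor
  · rintro ⟨⟨hxf, hxW⟩, hx⟩
    by_cases hsub : supp x ⊆ supp f
    · exact hxf hsub
    obtain ⟨q, hqf, hqx⟩ : ∃ q ∈ supp f, q ∉ supp x := by
      by_contra! h
      exact hsub (eq_of_subset_of_ncard_le h hx.le (hfin x)).superset
    have hmeet : ∀ i : Fin (n + 1), (supp (W ⟨q, hqf⟩ i) ∩ supp x).Nonempty := fun i =>
      nonempty_iff_ne_empty.mpr fun h => hxW ⟨q, hqf⟩ i (hdisj _ _ h)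
    have := nat_card_le_ncard_of_pairwise_inter_subset_singleton (hfin x) hqx
      ((hW ⟨q, hqf⟩).comp_of_injective Fin.val_injective) hmeet
    simp only [Nat.card_eq_fintype_card, Fintype.card_fin] at this
    omega
  · rintro rfl
    exact ⟨⟨fun _ => rfl, fun q i => hWf q i⟩, rfl⟩

end SuppSemigroup

theorem suppPerfect_sigmaDiscrete_semiZariski_general
    {S X : Type*} [Semigroup S] (supp : S → Set X)
    (h2 : ∀ f g : S, supp f ∩ supp g = ∅ → f * g = g * f)
    (hfin : ∀ f : S, (supp f).Finite)
    (hSF : ∀ F : Set X, F.Finite → {f : S | supp f ⊆ F}.Finite)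
    (hperf : ∀ F : Set X, F.Finite →
      {f : S | supp f ⊆ F} = {g : S | ∀ f : S, supp f ⊆ Fᶜ → f * g = g * f}) :
    SigmaDiscrete (semiZariski S) := by
  let _ : TopologicalSpace S := semiZariski S
  have hcent : ∀ F : Set X, F.Finite → ∀ g : S, (∀ f, supp f ⊆ Fᶜ → Commute f g) → supp g ⊆ F :=
    fun F hF g hg => (hperf F hF).superset hg
  refine ⟨fun n => {x | (supp x).ncard = n}, iUnion_eq_univ_iff.mpr fun x => ⟨_, rfl⟩,
    fun n => discreteTopology_subtype_iff'.mpr fun f hf => ?_⟩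
  obtain ⟨U, hU, hUf⟩ := exists_isOpen_semiZariski_inter_ncard_eq_singleton h2 hfin hSF hcent f
  exact ⟨U, hU, hf ▸ hUf⟩

/-- Every supp-perfect semigroup is σ-discrete in its semi-Zariski topology. -/
theorem suppPerfect_sigmaDiscrete_semiZariski
    {S X : Type*} [Semigroup S] (supp : S → Set X)
    (h1 : ∀ f g : S, supp (f * g) ⊆ supp f ∪ supp g)
    (h2 : ∀ f g : S, supp f ∩ supp g = ∅ → f * g = g * f)
    (hX : (⋃ a : S, supp a) = Set.univ)
    (hfin : ∀ f : S, (supp f).Finite)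
    (hSF : ∀ F : Set X, F.Finite → {f : S | supp f ⊆ F}.Finite)
    (hperf : ∀ F : Set X, F.Finite →
      {f : S | supp f ⊆ F} = {g : S | ∀ f : S, supp f ⊆ Fᶜ → f * g = g * f}) :
    SigmaDiscrete (semiZariski S) :=
  suppPerfect_sigmaDiscrete_semiZariski_general supp h2 hfin hSF hperf
end
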